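/- Let C be an induced 6-cycle with vertices c1,...,c6 (edges c_i c_{i+1}, indices mod 6) in a graph G, and let x be a vertex outside C with at most two neighbors on C. Then the subgraph of the complement of G induced on some 5 vertices among V(C) ∪ {x} is a wheel; specifically, if N(x) ∩ V(C) ⊆ {c1, c2} or equals {c1, c5}, then {x, c1, c3, c4, c6} induces in the complement a 4-cycle plus a vertex with three neighbors on it, and if N(x) ∩ V(C) = {c1, c4}, then {x, c2, c3, c5, c6} induces in the complement a 4-cycle plus a vertex with four neighbors on it. -/
import Mathlib


open SimpleGraph

/-- `G` contains an induced copy of `H`. -/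
def ContainsInduced {V W : Type*} (G : SimpleGraph V) (H : SimpleGraph W) : Prop :=
  ∃ f : W ↪ V, ∀ u v, G.Adj (f u) (f v) ↔ H.Adj u v

/-- The path on 5 vertices. -/
def path5 : SimpleGraph (Fin 5) :=
  SimpleGraph.fromRel (fun i j => (i : ℕ) + 1 = (j : ℕ))

/-- Two disjoint edges. -/
def twoK2 : SimpleGraph (Fin 4) :=
  SimpleGraph.fromRel (fun i j => (i = 0 ∧ j = 1) ∨ (i = 2 ∧ j = 3))

/-- The cycle on `n` vertices (for `n ≥ 3`). -/
def cycG (n : ℕ) : SimpleGraph (Fin n) :=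
  SimpleGraph.fromRel (fun i j => ((i : ℕ) + 1) % n = (j : ℕ))

/-- `G` contains an induced wheel: an induced (chordless) cycle of length at least 4
plus a vertex with at least three neighbors on the cycle. -/
def ContainsWheel {V : Type*} (G : SimpleGraph V) : Prop :=
  ∃ n : ℕ, 4 ≤ n ∧ ∃ (f : Fin n ↪ V) (hub : V),
    (∀ i, hub ≠ f i) ∧
    (∀ i j, G.Adj (f i) (f j) ↔ (cycG n).Adj i j) ∧
    3 ≤ {i : Fin n | G.Adj hub (f i)}.ncard

/-- `G` contains an induced wheel on at most `k` vertices. -/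
def ContainsWheelLE {V : Type*} (G : SimpleGraph V) (k : ℕ) : Prop :=
  ∃ n : ℕ, 4 ≤ n ∧ n + 1 ≤ k ∧ ∃ (f : Fin n ↪ V) (hub : V),
    (∀ i, hub ≠ f i) ∧
    (∀ i j, G.Adj (f i) (f j) ↔ (cycG n).Adj i j) ∧
    3 ≤ {i : Fin n | G.Adj hub (f i)}.ncard

/-- `s` is the vertex set of a hole (induced cycle of length at least 4) of `G`. -/
def IsHoleSet {V : Type*} (G : SimpleGraph V) (s : Set V) : Prop :=
  ∃ n : ℕ, 4 ≤ n ∧ ∃ f : Fin n ↪ V, Set.range f = s ∧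
    ∀ i j, G.Adj (f i) (f j) ↔ (cycG n).Adj i j

/-- `G` is a split graph: its vertex set partitions into a stable set and a clique. -/
def IsSplit {V : Type*} (G : SimpleGraph V) : Prop :=
  ∃ S K : Set V, (∀ v, v ∈ S ∨ v ∈ K) ∧ S ∩ K = ∅ ∧
    (∀ u ∈ S, ∀ v ∈ S, ¬G.Adj u v) ∧ G.IsClique K

/-- The induced subgraph on `{hub, a, b, c, d}` is a wheel: `a-b-c-d-a` is an induced
4-cycle and `hub` has at least three neighbors among `a, b, c, d`. -/
def IsWheel5 {V : Type*} (G : SimpleGraph V) (hub a b c d : V) : Prop :=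
  hub ≠ a ∧ hub ≠ b ∧ hub ≠ c ∧ hub ≠ d ∧ a ≠ c ∧ b ≠ d ∧
  G.Adj a b ∧ G.Adj b c ∧ G.Adj c d ∧ G.Adj d a ∧ ¬G.Adj a c ∧ ¬G.Adj b d ∧
  ((G.Adj hub a ∧ G.Adj hub b ∧ G.Adj hub c) ∨ (G.Adj hub a ∧ G.Adj hub b ∧ G.Adj hub d) ∨
    (G.Adj hub a ∧ G.Adj hub c ∧ G.Adj hub d) ∨ (G.Adj hub b ∧ G.Adj hub c ∧ G.Adj hub d))

instance : DecidableRel (cycG 6).Adj := fun i j =>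
  decidable_of_iff _ (SimpleGraph.fromRel_adj _ i j).symm

lemma cover6 : ∀ p : Fin 6 → Bool,
    (Finset.univ.filter (fun j => p j = true)).card ≤ 2 →
    ∃ r : Fin 6, p (r + 2) = false ∧ p (r + 5) = false ∧ p (r + 3) = false := by
  decide

lemma wheel_rot {V : Type*} (G : SimpleGraph V) (f : Fin 6 ↪ V)
    (hC : ∀ i j, G.Adj (f i) (f j) ↔ (cycG 6).Adj i j)
    (x : V) (hx : ∀ i, x ≠ f i) (r : Fin 6)
    (hb : ¬G.Adj x (f (r + 2))) (hc : ¬G.Adj x (f (r + 5)))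
    (hd : ¬G.Adj x (f (r + 3))) :
    IsWheel5 Gᶜ x (f r) (f (r + 2)) (f (r + 5)) (f (r + 3)) := by
  have cadj : ∀ i j : Fin 6, i ≠ j → ¬(cycG 6).Adj i j → Gᶜ.Adj (f i) (f j) :=
    fun i j hne h => (G.compl_adj _ _).2 ⟨f.injective.ne hne, fun hg => h ((hC i j).1 hg)⟩
  have cnadj : ∀ i j : Fin 6, (cycG 6).Adj i j → ¬Gᶜ.Adj (f i) (f j) :=
    fun i j h hg => ((G.compl_adj _ _).1 hg).2 ((hC i j).2 h)
  have cx : ∀ i : Fin 6, ¬G.Adj x (f i) → Gᶜ.Adj x (f i) :=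
    fun i h => (G.compl_adj _ _).2 ⟨hx i, h⟩
  refine ⟨hx _, hx _, hx _, hx _, f.injective.ne ?_, f.injective.ne ?_,
    cadj _ _ ?_ ?_, cadj _ _ ?_ ?_, cadj _ _ ?_ ?_, cadj _ _ ?_ ?_,
    cnadj _ _ ?_, cnadj _ _ ?_,
    Or.inr (Or.inr (Or.inr ⟨cx _ hb, cx _ hc, cx _ hd⟩))⟩ <;>
  fin_cases r <;> decide

lemma wheel_15 {V : Type*} (G : SimpleGraph V) (f : Fin 6 ↪ V)
    (hC : ∀ i j, G.Adj (f i) (f j) ↔ (cycG 6).Adj i j)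
    (x : V) (hx : ∀ i, x ≠ f i)
    (h1 : ¬G.Adj x (f 1)) (h4 : ¬G.Adj x (f 4))
    (h2 : ¬G.Adj x (f 2)) (h5 : ¬G.Adj x (f 5)) :
    IsWheel5 Gᶜ x (f 1) (f 4) (f 2) (f 5) := by
  have cadj : ∀ i j : Fin 6, i ≠ j → ¬(cycG 6).Adj i j → Gᶜ.Adj (f i) (f j) :=
    fun i j hne h => (G.compl_adj _ _).2 ⟨f.injective.ne hne, fun hg => h ((hC i j).1 hg)⟩
  have cnadj : ∀ i j : Fin 6, (cycG 6).Adj i j → ¬Gᶜ.Adj (f i) (f j) :=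
    fun i j h hg => ((G.compl_adj _ _).1 hg).2 ((hC i j).2 h)
  have cx : ∀ i : Fin 6, ¬G.Adj x (f i) → Gᶜ.Adj x (f i) :=
    fun i h => (G.compl_adj _ _).2 ⟨hx i, h⟩
  exact ⟨hx _, hx _, hx _, hx _, f.injective.ne (by decide), f.injective.ne (by decide),
    cadj _ _ (by decide) (by decide), cadj _ _ (by decide) (by decide),
    cadj _ _ (by decide) (by decide), cadj _ _ (by decide) (by decide),
    cnadj _ _ (by decide), cnadj _ _ (by decide),
    Or.inr (Or.inr (Or.inr ⟨cx _ h4, cx _ h2, cx _ h5⟩))⟩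

theorem stmt_9 {V : Type*} (G : SimpleGraph V) (f : Fin 6 ↪ V)
    (hC : ∀ i j, G.Adj (f i) (f j) ↔ (cycG 6).Adj i j)
    (x : V) (hx : ∀ i, x ≠ f i)
    (hdeg : {i : Fin 6 | G.Adj x (f i)}.ncard ≤ 2) :
    (∃ hub a b c d : V,
      (hub = x ∨ ∃ i, hub = f i) ∧ (a = x ∨ ∃ i, a = f i) ∧ (b = x ∨ ∃ i, b = f i) ∧
      (c = x ∨ ∃ i, c = f i) ∧ (d = x ∨ ∃ i, d = f i) ∧ IsWheel5 Gᶜ hub a b c d) ∧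
    (((∀ i, G.Adj x (f i) → i = 0 ∨ i = 1) ∨ (∀ i, G.Adj x (f i) ↔ (i = 0 ∨ i = 4))) →
      IsWheel5 Gᶜ x (f 0) (f 2) (f 5) (f 3)) ∧
    ((∀ i, G.Adj x (f i) ↔ (i = 0 ∨ i = 3)) →
      IsWheel5 Gᶜ x (f 1) (f 4) (f 2) (f 5) ∧
        Gᶜ.Adj x (f 1) ∧ Gᶜ.Adj x (f 4) ∧ Gᶜ.Adj x (f 2) ∧ Gᶜ.Adj x (f 5)) := by
  classical
  refine ⟨?_, ?_, ?_⟩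
  · have hp : ∃ r : Fin 6, ¬G.Adj x (f (r + 2)) ∧ ¬G.Adj x (f (r + 5)) ∧
        ¬G.Adj x (f (r + 3)) := by
      set p : Fin 6 → Bool := fun j => decide (G.Adj x (f j)) with hpdef
      have hcard : (Finset.univ.filter (fun j => p j = true)).card ≤ 2 := by
        have hs : {i : Fin 6 | G.Adj x (f i)} =
            ↑(Finset.univ.filter (fun j => p j = true)) := by
          ext i; simp [p]
        rw [hs, Set.ncard_coe_finset] at hdeg
        exact hdeg
      obtain ⟨r, h2, h5, h3⟩ := cover6 p hcard
      exact ⟨r, by simpa [p] using h2, by simpa [p] using h5, by simpa [p] using h3⟩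
    obtain ⟨r, hb, hc, hd⟩ := hp
    exact ⟨x, f r, f (r + 2), f (r + 5), f (r + 3), Or.inl rfl, Or.inr ⟨_, rfl⟩,
      Or.inr ⟨_, rfl⟩, Or.inr ⟨_, rfl⟩, Or.inr ⟨_, rfl⟩, wheel_rot G f hC x hx r hb hc hd⟩
  · rintro (h | h)
    · have hb : ¬G.Adj x (f 2) := fun hh => by
        rcases h 2 hh with h' | h' <;> exact absurd h' (by decide)
      have hc : ¬G.Adj x (f 5) := fun hh => by
        rcases h 5 hh with h' | h' <;> exact absurd h' (by decide)
      have hd : ¬G.Adj x (f 3) := fun hh => by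
        rcases h 3 hh with h' | h' <;> exact absurd h' (by decide)
      exact wheel_rot G f hC x hx 0 hb hc hd
    · have hb : ¬G.Adj x (f 2) := fun hh => by
        rcases (h 2).1 hh with h' | h' <;> exact absurd h' (by decide)
      have hc : ¬G.Adj x (f 5) := fun hh => by
        rcases (h 5).1 hh with h' | h' <;> exact absurd h' (by decide)
      have hd : ¬G.Adj x (f 3) := fun hh => by
        rcases (h 3).1 hh with h' | h' <;> exact absurd h' (by decide)
      exact wheel_rot G f hC x hx 0 hb hc hd
  · intro h
    have h1 : ¬G.Adj x (f 1) := fun hh => by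
      rcases (h 1).1 hh with h' | h' <;> exact absurd h' (by decide)
    have h4 : ¬G.Adj x (f 4) := fun hh => by
      rcases (h 4).1 hh with h' | h' <;> exact absurd h' (by decide)
    have h2 : ¬G.Adj x (f 2) := fun hh => by
      rcases (h 2).1 hh with h' | h' <;> exact absurd h' (by decide)
    have h5 : ¬G.Adj x (f 5) := fun hh => by
      rcases (h 5).1 hh with h' | h' <;> exact absurd h' (by decide)
    exact ⟨wheel_15 G f hC x hx h1 h4 h2 h5, (G.compl_adj _ _).2 ⟨hx _, h1⟩,
      (G.compl_adj _ _).2 ⟨hx _, h4⟩, (G.compl_adj _ _).2 ⟨hx _, h2⟩, (G.compl_adj _ _).2 ⟨hx _, h5⟩⟩
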